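/- Let 𝕊 be any countable dense subset of ℝ, and x, y bounded observables on a σ-MV-effect algebra E. Then for every t ∈ ℝ, ⋁_{s∈𝕊}(B_x(s) ∧ B_y(t−s)) = ⋁_{r∈ℚ}(B_x(r) ∧ B_y(t−r)); i.e., the spectral resolution of x + y is independent of the choice of countable dense set. -/
import Mathlib


open Set

/-- A σ-complete MV-effect algebra: an MV-algebra (with `⊕`, `¬`, `⊥ = 0`,
`⊤ = 1`) whose natural order is the given lattice order and in which every
countable subset has a supremum and an infimum (given by `sSup`/`sInf`). -/
class SigmaMVEffectAlgebra (E : Type*) extends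
    Lattice E, BoundedOrder E, SupSet E, InfSet E where
  oplus : E → E → E
  neg : E → E
  oplus_assoc : ∀ a b c : E, oplus (oplus a b) c = oplus a (oplus b c)
  oplus_comm : ∀ a b : E, oplus a b = oplus b a
  oplus_bot : ∀ a : E, oplus a ⊥ = a
  neg_neg : ∀ a : E, neg (neg a) = a
  oplus_top : ∀ a : E, oplus a ⊤ = ⊤
  neg_bot : neg (⊥ : E) = ⊤
  luk : ∀ a b : E, oplus (neg (oplus (neg a) b)) b = oplus (neg (oplus (neg b) a)) a
  le_iff_oplus : ∀ a b : E, a ≤ b ↔ oplus (neg a) b = ⊤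
  isLUB_sSup : ∀ s : Set E, s.Countable → IsLUB s (sSup s)
  isGLB_sInf : ∀ s : Set E, s.Countable → IsGLB s (sInf s)

namespace SigmaMVEffectAlgebra

variable {E : Type*} [SigmaMVEffectAlgebra E]

open Classical in
/-- The partial effect-algebra addition of the MV-effect algebra:
`a + b` is defined iff `a ≤ b'`, and then `a + b = a ⊕ b`. -/
noncomputable def padd (a b : E) : Option E :=
  if a ≤ neg b then some (oplus a b) else none

/-- An observable on `E`: a `σ`-homomorphism from the Borel σ-algebra of `ℝ`
into `E`. -/
structure Observable (E : Type*) [SigmaMVEffectAlgebra E] where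
  toFun : Set ℝ → E
  total : toFun Set.univ = ⊤
  additive : ∀ A B : Set ℝ, MeasurableSet A → MeasurableSet B → Disjoint A B →
    padd (toFun A) (toFun B) = some (toFun (A ∪ B))
  cont : ∀ A : ℕ → Set ℝ, (∀ n, MeasurableSet (A n)) → Monotone A →
    IsLUB (Set.range fun n => toFun (A n)) (toFun (⋃ n, A n))

/-- An observable is bounded if `x([α,β]) = 1` for some interval. -/
def Observable.Bounded (x : Observable E) : Prop :=
  ∃ α β : ℝ, x.toFun (Set.Icc α β) = ⊤

/-- The spectral resolution `B_x(t) = x((-∞,t))` of an observable. -/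
def spec (x : Observable E) (t : ℝ) : E := x.toFun (Set.Iio t)

end SigmaMVEffectAlgebra

namespace SigmaMVEffectAlgebra

variable {E : Type*} [SigmaMVEffectAlgebra E]

/-- MV truncated subtraction: `a ⊖ b = ¬(¬a ⊕ b)`. -/
def sub (a b : E) : E := neg (oplus (neg a) b)

lemma neg_oplus_self (a : E) : oplus (neg a) a = ⊤ :=
  (le_iff_oplus a a).1 le_rfl

lemma bot_oplus (a : E) : oplus ⊥ a = a := by rw [oplus_comm, oplus_bot]

lemma top_oplus (a : E) : oplus ⊤ a = ⊤ := by rw [oplus_comm, oplus_top]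

lemma neg_top : neg (⊤ : E) = ⊥ := by
  rw [← neg_bot (E := E), neg_neg]

lemma le_oplus_right (a b : E) : a ≤ oplus b a := by
  rw [le_iff_oplus, oplus_comm b a, ← oplus_assoc, neg_oplus_self, top_oplus]

lemma le_oplus_left (a b : E) : a ≤ oplus a b := by
  rw [oplus_comm]; exact le_oplus_right a b

lemma sub_le_iff {a b c : E} : sub a b ≤ c ↔ a ≤ oplus b c := by
  rw [le_iff_oplus, sub, neg_neg, oplus_assoc, ← le_iff_oplus]

lemma le_oplus_sub (a b : E) : a ≤ oplus b (sub a b) := sub_le_iff.1 le_rfl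

lemma sub_le_sub_left {a c : E} (h : a ≤ c) (b : E) : sub a b ≤ sub c b :=
  sub_le_iff.2 (h.trans (le_oplus_sub c b))

lemma luk' (a b : E) : oplus (sub a b) b = oplus (sub b a) a := luk a b

lemma oplus_sub_of_le {a b : E} (h : a ≤ b) : oplus (sub b a) a = b := by
  have h1 : sub a b = ⊥ := by
    rw [sub, (le_iff_oplus a b).1 h, neg_top]
  rw [← luk' a b, h1, bot_oplus]

lemma oplus_le_oplus_left {x y : E} (h : x ≤ y) (b : E) :
    oplus x b ≤ oplus y b := by
  have hy : oplus (oplus x b) (sub y x) = oplus y b := by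
    rw [oplus_assoc, oplus_comm b (sub y x), ← oplus_assoc,
      oplus_comm x (sub y x), oplus_sub_of_le h]
  rw [← hy]; exact le_oplus_left _ _

lemma oplus_le_oplus {x y z w : E} (h1 : x ≤ y) (h2 : z ≤ w) :
    oplus x z ≤ oplus y w :=
  (oplus_le_oplus_left h1 z).trans
    (by rw [oplus_comm y z, oplus_comm y w]; exact oplus_le_oplus_left h2 y)

lemma neg_le_neg' {a b : E} (h : a ≤ b) : neg b ≤ neg a := by
  rw [le_iff_oplus, neg_neg, oplus_comm, ← le_iff_oplus]; exact h

lemma sub_self_le (a b : E) : sub a b ≤ a :=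
  sub_le_iff.2 (le_oplus_right a b)

/-- The lattice join coincides with the MV join `(a ⊖ b) ⊕ b`. -/
lemma sup_eq (a b : E) : a ⊔ b = oplus (sub a b) b := by
  refine le_antisymm (sup_le ?_ (le_oplus_right b (sub a b))) ?_
  · rw [luk' a b]; exact le_oplus_right a (sub b a)
  · have h1 : sub a b ≤ sub (a ⊔ b) b := sub_le_sub_left le_sup_left b
    calc oplus (sub a b) b ≤ oplus (sub (a ⊔ b) b) b :=
          oplus_le_oplus_left h1 b
      _ = a ⊔ b := oplus_sub_of_le le_sup_right

lemma neg_inf (a b : E) : neg (a ⊓ b) = neg a ⊔ neg b := by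
  refine le_antisymm ?_ (sup_le (neg_le_neg' inf_le_left) (neg_le_neg' inf_le_right))
  have h : neg (neg a ⊔ neg b) ≤ a ⊓ b := by
    refine le_inf ?_ ?_
    · have := neg_le_neg' (le_sup_left : neg a ≤ neg a ⊔ neg b)
      rwa [neg_neg] at this
    · have := neg_le_neg' (le_sup_right : neg b ≤ neg a ⊔ neg b)
      rwa [neg_neg] at this
  have := neg_le_neg' h
  rwa [neg_neg] at this

/-- The lattice meet coincides with the MV meet `b ⊖ (b ⊖ a)`. -/
lemma inf_eq (a b : E) : a ⊓ b = sub b (sub b a) := by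
  have h : a ⊓ b = neg (neg a ⊔ neg b) := by rw [← neg_inf, neg_neg]
  rw [h, sup_eq]
  show neg (oplus (sub (neg a) (neg b)) (neg b)) = sub b (sub b a)
  rw [sub, neg_neg, sub, sub, oplus_comm a (neg b),
    oplus_comm (neg (oplus (neg b) a)) (neg b)]

/-- Countable meet-distributivity in a σ-MV-effect algebra. -/
lemma inf_sSup_le {a : E} {T : Set E} (hT : T.Countable) :
    a ⊓ sSup T ≤ sSup ((fun b => a ⊓ b) '' T) := by
  set c := sSup ((fun b => a ⊓ b) '' T) with hc_def
  have hc := isLUB_sSup ((fun b => a ⊓ b) '' T) (hT.image _)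
  have hB := isLUB_sSup T hT
  set B := sSup T with hB_def
  have hub : ∀ b ∈ T, b ≤ oplus c (sub B a) := by
    intro b hb
    have h1 : b ≤ oplus (a ⊓ b) (sub b a) := by
      rw [inf_eq, oplus_comm]
      exact le_oplus_sub b (sub b a)
    refine h1.trans (oplus_le_oplus ?_ ?_)
    · exact hc.1 ⟨b, hb, rfl⟩
    · exact sub_le_sub_left (hB.1 hb) a
  have hBle : B ≤ oplus c (sub B a) := hB.2 hub
  have : sub B (sub B a) ≤ c := sub_le_iff.2 (by rwa [oplus_comm])
  rwa [← inf_eq] at this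

lemma Observable.mono (x : Observable E) {A B : Set ℝ}
    (hA : MeasurableSet A) (hB : MeasurableSet B) (h : A ⊆ B) :
    x.toFun A ≤ x.toFun B := by
  have hadd := x.additive A (B \ A) hA (hB.diff hA) disjoint_sdiff_self_right
  rw [Set.union_diff_cancel h] at hadd
  unfold padd at hadd
  by_cases hcond : x.toFun A ≤ neg (x.toFun (B \ A))
  · rw [if_pos hcond] at hadd
    have : x.toFun B = oplus (x.toFun A) (x.toFun (B \ A)) :=
      (Option.some_injective _ hadd).symm
    rw [this]; exact le_oplus_left _ _
  · rw [if_neg hcond] at hadd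
    exact absurd hadd (by simp)

lemma spec_mono (x : Observable E) : Monotone (spec x) := fun s t h =>
  x.mono measurableSet_Iio measurableSet_Iio (Set.Iio_subset_Iio h)

/-- Key lemma: for any countable dense set `D` and any real `s₀`,
`B_x(s₀) ⊓ B_y(t - s₀)` lies below the supremum over `D`. -/
lemma spec_inf_le_sSup (x y : Observable E) (t : ℝ) (D : Set ℝ)
    (hDc : D.Countable) (hDd : Dense D) (s₀ : ℝ) :
    spec x s₀ ⊓ spec y (t - s₀) ≤
      sSup ((fun s : ℝ => spec x s ⊓ spec y (t - s)) '' D) := by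
  set f : ℝ → E := fun s => spec x s ⊓ spec y (t - s) with hf
  -- choose u n ∈ D with s₀ - 1/(n+1) < u n < s₀
  have hu : ∀ n : ℕ, ∃ c ∈ D, c ∈ Set.Ioo (s₀ - 1 / (n + 1)) s₀ := by
    intro n
    refine hDd.exists_between ?_
    have : (0 : ℝ) < 1 / (n + 1) := by positivity
    linarith
  choose u huD hu1 using hu
  -- monotone envelope
  set m : ℕ → ℝ := fun n => (Finset.range (n + 1)).sup' (by simp) u with hm
  have hmD : ∀ n, m n ∈ D := by
    intro n
    obtain ⟨k, -, hk⟩ := Finset.exists_mem_eq_sup' (s := Finset.range (n + 1))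
      (by simp) u
    show (Finset.range (n + 1)).sup' (by simp) u ∈ D
    rw [hk]; exact huD k
  have hmlt : ∀ n, m n < s₀ := by
    intro n
    rw [hm]
    exact (Finset.sup'_lt_iff (by simp)).2 fun k _ => (hu1 k).2
  have hmge : ∀ n, u n ≤ m n := fun n =>
    Finset.le_sup' u (Finset.mem_range.2 (Nat.lt_succ_self n))
  have hmono : Monotone m := by
    intro i j hij
    exact Finset.sup'_mono u (Finset.range_subset_range.2 (by omega)) (by simp)
  have hUnion : (⋃ n, Set.Iio (m n)) = Set.Iio s₀ := by
    apply Set.Subset.antisymm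
    · exact Set.iUnion_subset fun n => Set.Iio_subset_Iio (hmlt n).le
    · intro z hz
      obtain ⟨n, hn⟩ := exists_nat_one_div_lt (sub_pos.2 (Set.mem_Iio.1 hz))
      refine Set.mem_iUnion.2 ⟨n, ?_⟩
      have h1 : s₀ - 1 / (n + 1) < u n := (hu1 n).1
      have : z < u n := by
        have : (1 : ℝ) / (n + 1) < s₀ - z := hn
        linarith
      exact lt_of_lt_of_le this (hmge n)
  have hcont := x.cont (fun n => Set.Iio (m n)) (fun n => measurableSet_Iio)
    (fun i j hij => Set.Iio_subset_Iio (hmono hij))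
  rw [hUnion] at hcont
  set T : Set E := Set.range fun n => spec x (m n) with hT
  have hTc : T.Countable := Set.countable_range _
  have hspec : spec x s₀ = sSup T := hcont.unique (isLUB_sSup T hTc)
  set a := spec y (t - s₀) with ha
  have hfD := isLUB_sSup (f '' D) (hDc.image f)
  calc spec x s₀ ⊓ a = a ⊓ sSup T := by rw [hspec, inf_comm]
    _ ≤ sSup ((fun b => a ⊓ b) '' T) := inf_sSup_le hTc
    _ ≤ sSup (f '' D) := by
        refine ((isLUB_sSup _ (hTc.image _)).2 ?_)
        rintro e ⟨b, ⟨n, rfl⟩, rfl⟩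
        have h1 : a ⊓ spec x (m n) ≤ f (m n) := by
          rw [hf, inf_comm]
          exact inf_le_inf_left _ (spec_mono y (by linarith [hmlt n]))
        exact h1.trans (hfD.1 ⟨m n, hmD n, rfl⟩)

end SigmaMVEffectAlgebra

open SigmaMVEffectAlgebra in
/-- The spectral resolution of `x + y` does not depend on the choice of a
countable dense set: for any countable dense `𝕊 ⊆ ℝ`,
`⋁_{s∈𝕊}(B_x(s) ∧ B_y(t−s)) = ⋁_{r∈ℚ}(B_x(r) ∧ B_y(t−r))`. -/
theorem sum_of_bounded_observables_dense_independent
    {E : Type*} [SigmaMVEffectAlgebra E] (x y : Observable E)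
    (hx : x.Bounded) (hy : y.Bounded)
    (S : Set ℝ) (hScount : S.Countable) (hSdense : Dense S) (t : ℝ) :
    sSup ((fun s : ℝ => spec x s ⊓ spec y (t - s)) '' S) =
      ⨆ r : ℚ, spec x r ⊓ spec y (t - r) := by
  set f : ℝ → E := fun s => spec x s ⊓ spec y (t - s) with hf
  set Q : Set ℝ := Set.range ((↑) : ℚ → ℝ) with hQ
  have hQc : Q.Countable := Set.countable_range _
  have hQd : Dense Q := Rat.denseRange_cast
  have hrange : (Set.range fun r : ℚ => spec x (r : ℝ) ⊓ spec y (t - (r : ℝ)))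
      = f '' Q := by
    rw [hQ, ← Set.range_comp]; rfl
  have hR : (⨆ r : ℚ, spec x (r : ℝ) ⊓ spec y (t - (r : ℝ))) = sSup (f '' Q) := by
    rw [iSup, hrange]
  rw [hR]
  have hS := isLUB_sSup (f '' S) (hScount.image f)
  have hQL := isLUB_sSup (f '' Q) (hQc.image f)
  apply le_antisymm
  · refine hS.2 ?_
    rintro e ⟨s, hs, rfl⟩
    exact spec_inf_le_sSup x y t Q hQc hQd s
  · refine hQL.2 ?_
    rintro e ⟨s, hs, rfl⟩
    exact spec_inf_le_sSup x y t S hScount hSdense s
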